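/- Let Π be a C² smooth projection-valued function with Π·∂Π = 0 and let ξ = Π·h with ∂h = 0. Then ⟨ξ, Δξ⟩ = −‖∂ξ‖² = −‖(∂Π)ξ‖² pointwise, where Δ = ∂∂̄. -/

import Mathlib

/-
Since `∂h = 0`, the Leibniz rule gives `∂ξ = (∂Π) h`, hence `Π ∂ξ = 0`, and as `Π` is self-adjoint
`⟪∂ξ, ξ⟫ = ⟪Π ∂ξ, h⟫ = 0` on `U`. Applying `∂` to this identity, with `∂∂̄ = ∂̄∂` by symmetry of the
second derivative, gives `⟪∂∂̄ξ, ξ⟫ + ‖∂ξ‖² = 0`. Differentiating `ξ = Π ξ` gives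
`∂ξ = (∂Π) ξ + Π ∂ξ = (∂Π) ξ`.
-/

open Complex
open scoped InnerProductSpace

/-- Wirtinger derivative `∂ = ½(∂/∂x − i·∂/∂y)`. -/
noncomputable def wD {F : Type*} [NormedAddCommGroup F] [NormedSpace ℂ F]
    (f : ℂ → F) (z : ℂ) : F :=
  (2:ℂ)⁻¹ • (fderiv ℝ f z 1 - Complex.I • fderiv ℝ f z Complex.I)

/-- Conjugate Wirtinger derivative `∂̄ = ½(∂/∂x + i·∂/∂y)`. -/
noncomputable def wDb {F : Type*} [NormedAddCommGroup F] [NormedSpace ℂ F]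
    (f : ℂ → F) (z : ℂ) : F :=
  (2:ℂ)⁻¹ • (fderiv ℝ f z 1 + Complex.I • fderiv ℝ f z Complex.I)

open ContinuousLinearMap Filter Topology

section ComplexLinearFamily

variable {E F G : Type*} [NormedAddCommGroup E] [NormedSpace ℝ E]
  [NormedAddCommGroup F] [NormedSpace ℂ F] [NormedAddCommGroup G] [NormedSpace ℂ G]
  {P : E → F →L[ℂ] G} {u : E → F} {x : E}

theorem ContDiffAt.complex_clm_apply {n : WithTop ℕ∞} (hP : ContDiffAt ℝ n P x)
    (hu : ContDiffAt ℝ n u x) : ContDiffAt ℝ n (fun y => P y (u y)) x :=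
  ((restrictScalarsL ℂ F G ℝ ℝ).contDiff.contDiffAt.comp x hP).clm_apply hu

theorem fderiv_complex_clm_apply (hP : DifferentiableAt ℝ P x) (hu : DifferentiableAt ℝ u x)
    (v : E) :
    fderiv ℝ (fun y => P y (u y)) x v = P x (fderiv ℝ u x v) + fderiv ℝ P x v (u x) := by
  have hQ := (restrictScalarsL ℂ F G ℝ ℝ).hasFDerivAt.comp x hP.hasFDerivAt
  exact DFunLike.congr_fun (hQ.clm_apply hu.hasFDerivAt).fderiv v

end ComplexLinearFamily

section Wirtinger

variable {F : Type*} [NormedAddCommGroup F] [NormedSpace ℂ F] {f : ℂ → F} {z : ℂ}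

theorem Filter.EventuallyEq.wD_eq {g : ℂ → F} (hfg : f =ᶠ[𝓝 z] g) : wD f z = wD g z := by
  rw [wD, wD, hfg.fderiv_eq]

theorem wD_clm_apply {G : Type*} [NormedAddCommGroup G] [NormedSpace ℂ G]
    {P : ℂ → F →L[ℂ] G} {u : ℂ → F}
    (hP : DifferentiableAt ℝ P z) (hu : DifferentiableAt ℝ u z) :
    wD (fun w => P w (u w)) z = wD P z (u z) + P z (wD u z) := by
  simp only [wD, fderiv_complex_clm_apply hP hu, smul_apply, sub_apply, map_smul, map_sub]
  module

theorem wD_eq_wD_clm_apply_of_apply_eq_self {P : ℂ → F →L[ℂ] F} {ξ : ℂ → F}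
    (hP : DifferentiableAt ℝ P z) (hξ : DifferentiableAt ℝ ξ z)
    (hfix : (fun w => P w (ξ w)) =ᶠ[𝓝 z] ξ) (hker : P z (wD ξ z) = 0) :
    wD ξ z = wD P z (ξ z) := by
  rw [← hfix.wD_eq, wD_clm_apply hP hξ, hker, add_zero]

theorem fderiv_wD_apply (hf : DifferentiableAt ℝ (fderiv ℝ f) z) (v : ℂ) :
    fderiv ℝ (wD f) z v
      = (2:ℂ)⁻¹ • (fderiv ℝ (fderiv ℝ f) z v 1 - I • fderiv ℝ (fderiv ℝ f) z v I) := by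
  have hD (a : ℂ) := (apply ℝ F a).hasFDerivAt.comp z hf.hasFDerivAt
  exact DFunLike.congr_fun (((hD 1).sub ((hD I).const_smul I)).const_smul (2:ℂ)⁻¹).fderiv v

theorem fderiv_wDb_apply (hf : DifferentiableAt ℝ (fderiv ℝ f) z) (v : ℂ) :
    fderiv ℝ (wDb f) z v
      = (2:ℂ)⁻¹ • (fderiv ℝ (fderiv ℝ f) z v 1 + I • fderiv ℝ (fderiv ℝ f) z v I) := by
  have hD (a : ℂ) := (apply ℝ F a).hasFDerivAt.comp z hf.hasFDerivAt
  exact DFunLike.congr_fun (((hD 1).add ((hD I).const_smul I)).const_smul (2:ℂ)⁻¹).fderiv v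

theorem wD_wDb_comm (hf : ContDiffAt ℝ 2 f z) : wD (wDb f) z = wDb (wD f) z := by
  have hf' : DifferentiableAt ℝ (fderiv ℝ f) z :=
    (hf.fderiv_right (m := 1) le_rfl).differentiableAt one_ne_zero
  simp only [wD, wDb, fderiv_wD_apply hf', fderiv_wDb_apply hf',
    hf.isSymmSndFDerivAt (by simp) 1 I]
  module

end Wirtinger

section WirtingerInner

variable {H : Type*} [NormedAddCommGroup H] [InnerProductSpace ℂ H] {ξ : ℂ → H} {z : ℂ}

-- The conjugate-linear first slot turns `∂` into `∂̄`.
theorem wD_inner {f g : ℂ → H} (hf : DifferentiableAt ℝ f z) (hg : DifferentiableAt ℝ g z) :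
    wD (fun w => ⟪f w, g w⟫_ℂ) z = ⟪wDb f z, g z⟫_ℂ + ⟪f z, wD g z⟫_ℂ := by
  simp only [wD, wDb, fderiv_inner_apply (𝕜 := ℂ) hf hg, inner_smul_left, inner_smul_right,
    inner_add_left, inner_sub_right, map_inv₀, conj_ofNat, conj_I, smul_eq_mul]
  ring

theorem inner_wD_wDb_self_eq_neg_norm_sq (hξ : ContDiffAt ℝ 2 ξ z)
    (horth : (fun w => ⟪wD ξ w, ξ w⟫_ℂ) =ᶠ[𝓝 z] 0) :
    ⟪wD (wDb ξ) z, ξ z⟫_ℂ = -((‖wD ξ z‖ ^ 2 : ℝ) : ℂ) := by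
  have hwDξ : DifferentiableAt ℝ (wD ξ) z := by
    have hDξ := (hξ.fderiv_right (m := 1) le_rfl).differentiableAt one_ne_zero
    unfold wD; fun_prop
  have h0 : wD (fun w => ⟪wD ξ w, ξ w⟫_ℂ) z = 0 := by
    rw [horth.wD_eq]
    simp [wD]
  rw [wD_inner hwDξ (hξ.differentiableAt two_ne_zero)] at h0
  rw [wD_wDb_comm hξ, eq_neg_of_add_eq_zero_left h0, inner_self_eq_norm_sq_to_K]
  push_cast; rfl

end WirtingerInner

/-- with `ξ = Π·h`, `∂h = 0`, one has
`⟨ξ, Δξ⟩ = −‖∂ξ‖² = −‖(∂Π)ξ‖²` pointwise, where `Δ = ∂∂̄`. -/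
theorem stmt8 {H : Type*} [NormedAddCommGroup H] [InnerProductSpace ℂ H] [CompleteSpace H]
    (U : Set ℂ) (hU : IsOpen U) (P : ℂ → H →L[ℂ] H)
    (hsm : ContDiffOn ℝ 2 P U)
    (hproj : ∀ z ∈ U, (P z) ∘L (P z) = P z)
    (hsa : ∀ z ∈ U, ContinuousLinearMap.adjoint (P z) = P z)
    (hPdP : ∀ z ∈ U, (P z) ∘L (wD P z) = 0)
    (h : ℂ → H) (hh : ContDiffOn ℝ 2 h U)
    (hanti : ∀ z ∈ U, wD h z = 0)
    (ξ : ℂ → H) (hξ : ∀ z, ξ z = P z (h z)) :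
    ∀ z ∈ U,
      ⟪wD (fun w => wDb ξ w) z, ξ z⟫_ℂ = -((‖wD ξ z‖^2 : ℝ) : ℂ) ∧
      ‖wD ξ z‖ = ‖(wD P z) (ξ z)‖ := by
  obtain rfl : ξ = fun w => P w (h w) := funext hξ
  have hPd (w) (hw : w ∈ U) : DifferentiableAt ℝ P w :=
    (hsm.contDiffAt (hU.mem_nhds hw)).differentiableAt two_ne_zero
  have hξC2 (w) (hw : w ∈ U) : ContDiffAt ℝ 2 (fun w => P w (h w)) w :=
    (hsm.contDiffAt (hU.mem_nhds hw)).complex_clm_apply (hh.contDiffAt (hU.mem_nhds hw))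
  have hker (w) (hw : w ∈ U) : P w (wD (fun w => P w (h w)) w) = 0 := by
    rw [wD_clm_apply (hPd w hw) ((hh.contDiffAt (hU.mem_nhds hw)).differentiableAt two_ne_zero),
      hanti w hw, map_zero, add_zero]
    exact congr($(hPdP w hw) (h w))
  have horth (w) (hw : w ∈ U) : ⟪wD (fun w => P w (h w)) w, P w (h w)⟫_ℂ = 0 := by
    rw [← adjoint_inner_left, hsa w hw, hker w hw, inner_zero_left]
  intro z hz
  refine ⟨inner_wD_wDb_self_eq_neg_norm_sq (hξC2 z hz)
    (eventuallyEq_of_mem (hU.mem_nhds hz) horth), ?_⟩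
  have hfix : (fun w => P w (P w (h w))) =ᶠ[𝓝 z] fun w => P w (h w) :=
    eventuallyEq_of_mem (hU.mem_nhds hz) fun w hw => congr($(hproj w hw) (h w))
  rw [wD_eq_wD_clm_apply_of_apply_eq_self (hPd z hz) ((hξC2 z hz).differentiableAt two_ne_zero)
    hfix (hker z hz)]
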